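/- arXiv:2308.00167 — 8 statements merged into one kernel-verified Lean document; each statement's English description precedes it below -/
import Mathlib

section
/- For positive reals Y_C0, Y_C1, Y_T0, Y_T1, the log-specification DD parameter β₄ = (ln Y_T1 − ln Y_T0) − (ln Y_C1 − ln Y_C0) equals zero if and only if the level DD parameter Δ_T − Δ_C equals Δ_C · (Y_T0 − Y_C0)/Y_C0, where Δ_T = Y_T1 − Y_T0 and Δ_C = Y_C1 − Y_C0. -/
/-- For positive cell means, the log-DD parameter `β₄` is zero iff the level DD
parameter `Δ_T − Δ_C` equals `Δ_C · (Y_T0 − Y_C0)/Y_C0`. -/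
theorem logDD_eq_zero_iff_levelDD_eq
    (Y_C0 Y_C1 Y_T0 Y_T1 : ℝ)
    (hC0 : 0 < Y_C0) (hC1 : 0 < Y_C1) (hT0 : 0 < Y_T0) (hT1 : 0 < Y_T1) :
    (Real.log Y_T1 - Real.log Y_T0) - (Real.log Y_C1 - Real.log Y_C0) = 0 ↔
      (Y_T1 - Y_T0) - (Y_C1 - Y_C0)
        = (Y_C1 - Y_C0) * (Y_T0 - Y_C0) / Y_C0 := by
  have key : Y_T1 * Y_C0 = Y_C1 * Y_T0 ↔
      (Y_T1 - Y_T0) - (Y_C1 - Y_C0) = (Y_C1 - Y_C0) * (Y_T0 - Y_C0) / Y_C0 := by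
    rw [eq_div_iff hC0.ne']
    constructor <;> intro h <;> nlinarith
  rw [← key]
  constructor
  · intro h
    have h2 : Real.log (Y_T1 * Y_C0) = Real.log (Y_C1 * Y_T0) := by
      rw [Real.log_mul hT1.ne' hC0.ne', Real.log_mul hC1.ne' hT0.ne']
      linarith
    exact Real.log_injOn_pos (Set.mem_Ioi.mpr (mul_pos hT1 hC0))
      (Set.mem_Ioi.mpr (mul_pos hC1 hT0)) h2
  · intro h
    have h2 : Real.log (Y_T1 * Y_C0) = Real.log (Y_C1 * Y_T0) := by rw [h]
    rw [Real.log_mul hT1.ne' hC0.ne', Real.log_mul hC1.ne' hT0.ne'] at h2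
    linarith
end

section
/- Let α₁, α₂, α₃, α₄ be real parameters of the saturated additive DD model, and suppose the implied cell means Y_C0 = α₁, Y_T0 = α₁ + α₂, Y_C1 = α₁ + α₃, Y_T1 = α₁ + α₂ + α₃ + α₄ are all positive. Then the log DD parameter β₄ = (ln Y_T1 − ln Y_T0) − (ln Y_C1 − ln Y_C0) equals zero if and only if α₄ = α₃ · α₂ / α₁. -/
/-- In the saturated additive DD model with positive implied cell means,
the log-DD parameter `β₄` is zero iff `α₄ = α₃·α₂/α₁`. -/
theorem logDD_eq_zero_iff_alpha_cond
    (α₁ α₂ α₃ α₄ : ℝ)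
    (hC0 : 0 < α₁) (hT0 : 0 < α₁ + α₂) (hC1 : 0 < α₁ + α₃)
    (hT1 : 0 < α₁ + α₂ + α₃ + α₄) :
    (Real.log (α₁ + α₂ + α₃ + α₄) - Real.log (α₁ + α₂))
      - (Real.log (α₁ + α₃) - Real.log α₁) = 0 ↔
      α₄ = α₃ * α₂ / α₁ := by
  have h1 : (Real.log (α₁ + α₂ + α₃ + α₄) - Real.log (α₁ + α₂))
      - (Real.log (α₁ + α₃) - Real.log α₁) = 0 ↔
      Real.log ((α₁ + α₂ + α₃ + α₄) * α₁) = Real.log ((α₁ + α₃) * (α₁ + α₂)) := by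
    rw [Real.log_mul (ne_of_gt hT1) (ne_of_gt hC0),
        Real.log_mul (ne_of_gt hC1) (ne_of_gt hT0)]
    constructor <;> intro h <;> linarith
  rw [h1, Real.log_injOn_pos.eq_iff (Set.mem_Ioi.mpr (by positivity))
      (Set.mem_Ioi.mpr (by positivity))]
  rw [eq_div_iff (ne_of_gt hC0)]
  constructor <;> intro h <;> nlinarith [h]
end

section
/- Let α₁, α₂, α₃, α₄ be real parameters of the saturated additive DD model, and suppose the implied cell means Y_C0 = α₁, Y_T0 = α₁ + α₂, Y_C1 = α₁ + α₃, Y_T1 = α₁ + α₂ + α₃ + α₄ are all positive. Then the log DD parameter β₄ = (ln Y_T1 − ln Y_T0) − (ln Y_C1 − ln Y_C0) satisfies: β₄ > 0 if and only if α₄ · α₁ > α₃ · α₂. -/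
/-- In the saturated additive DD model with positive implied cell means,
the log-DD parameter `β₄` is positive iff `α₄·α₁ > α₃·α₂`. -/
theorem logDD_pos_iff_alpha_cond
    (α₁ α₂ α₃ α₄ : ℝ)
    (hC0 : 0 < α₁) (hT0 : 0 < α₁ + α₂) (hC1 : 0 < α₁ + α₃)
    (hT1 : 0 < α₁ + α₂ + α₃ + α₄) :
    0 < (Real.log (α₁ + α₂ + α₃ + α₄) - Real.log (α₁ + α₂))
        - (Real.log (α₁ + α₃) - Real.log α₁) ↔
      α₃ * α₂ < α₄ * α₁ := by
  have key : (α₁ + α₃) * (α₁ + α₂) < (α₁ + α₂ + α₃ + α₄) * α₁ ↔ α₃ * α₂ < α₄ * α₁ := by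
    constructor <;> intro h <;> nlinarith
  rw [← key]
  rw [sub_pos, sub_lt_sub_iff, ← Real.log_mul (ne_of_gt hT1) (ne_of_gt hC0),
    ← Real.log_mul (ne_of_gt hC1) (ne_of_gt hT0),
    Real.log_lt_log_iff (by positivity) (by positivity)]
end

section
/- For positive reals Y_C0, Y_C1, Y_T0, Y_T1, with Δ_T = Y_T1 − Y_T0 and Δ_C = Y_C1 − Y_C0: if 0 < Δ_T − Δ_C < Δ_C · (Y_T0 − Y_C0)/Y_C0, then the level DD parameter α₄ = Δ_T − Δ_C is strictly positive while the log DD parameter β₄ = (ln Y_T1 − ln Y_T0) − (ln Y_C1 − ln Y_C0) is strictly negative; in particular sign(α₄) ≠ sign(β₄). -/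
/-- Sign switch (positive level DD, negative log DD): if
`0 < Δ_T − Δ_C < Δ_C·(Y_T0 − Y_C0)/Y_C0`, then the level DD parameter is
strictly positive while the log DD parameter is strictly negative. -/
theorem signSwitch_pos_level_neg_log
    (Y_C0 Y_C1 Y_T0 Y_T1 : ℝ)
    (hC0 : 0 < Y_C0) (hC1 : 0 < Y_C1) (hT0 : 0 < Y_T0) (hT1 : 0 < Y_T1)
    (h1 : 0 < (Y_T1 - Y_T0) - (Y_C1 - Y_C0))
    (h2 : (Y_T1 - Y_T0) - (Y_C1 - Y_C0) < (Y_C1 - Y_C0) * (Y_T0 - Y_C0) / Y_C0) :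
    0 < (Y_T1 - Y_T0) - (Y_C1 - Y_C0) ∧
      (Real.log Y_T1 - Real.log Y_T0) - (Real.log Y_C1 - Real.log Y_C0) < 0 := by
  refine ⟨h1, ?_⟩
  have key : Y_T1 * Y_C0 < Y_T0 * Y_C1 := by
    have h2' : (Y_T1 - Y_T0 - (Y_C1 - Y_C0)) * Y_C0 < (Y_C1 - Y_C0) * (Y_T0 - Y_C0) :=
      (lt_div_iff₀ hC0).mp h2
    nlinarith [h2']
  have hlog := Real.log_lt_log (by positivity) key
  rw [Real.log_mul (ne_of_gt hT1) (ne_of_gt hC0),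
      Real.log_mul (ne_of_gt hT0) (ne_of_gt hC1)] at hlog
  linarith
end

section
/- For positive reals Y_C0, Y_C1, Y_T0, Y_T1, with Δ_T = Y_T1 − Y_T0 and Δ_C = Y_C1 − Y_C0: if Δ_C · (Y_T0 − Y_C0)/Y_C0 < Δ_T − Δ_C < 0, then the level DD parameter α₄ = Δ_T − Δ_C is strictly negative while the log DD parameter β₄ = (ln Y_T1 − ln Y_T0) − (ln Y_C1 − ln Y_C0) is strictly positive; in particular sign(α₄) ≠ sign(β₄). -/
/-- Sign switch (negative level DD, positive log DD): if
`Δ_C·(Y_T0 − Y_C0)/Y_C0 < Δ_T − Δ_C < 0`, then the level DD parameter is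
strictly negative while the log DD parameter is strictly positive. -/
theorem signSwitch_neg_level_pos_log
    (Y_C0 Y_C1 Y_T0 Y_T1 : ℝ)
    (hC0 : 0 < Y_C0) (hC1 : 0 < Y_C1) (hT0 : 0 < Y_T0) (hT1 : 0 < Y_T1)
    (h1 : (Y_C1 - Y_C0) * (Y_T0 - Y_C0) / Y_C0 < (Y_T1 - Y_T0) - (Y_C1 - Y_C0))
    (h2 : (Y_T1 - Y_T0) - (Y_C1 - Y_C0) < 0) :
    (Y_T1 - Y_T0) - (Y_C1 - Y_C0) < 0 ∧
      0 < (Real.log Y_T1 - Real.log Y_T0) - (Real.log Y_C1 - Real.log Y_C0) := by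
  refine ⟨h2, ?_⟩
  have h1' : (Y_C1 - Y_C0) * (Y_T0 - Y_C0) < ((Y_T1 - Y_T0) - (Y_C1 - Y_C0)) * Y_C0 :=
    (div_lt_iff₀ hC0).mp h1
  have key : Y_C1 * Y_T0 < Y_T1 * Y_C0 := by nlinarith
  have hlt : Y_C1 / Y_C0 < Y_T1 / Y_T0 :=
    (div_lt_div_iff₀ hC0 hT0).mpr key
  have := Real.log_lt_log (div_pos hC1 hC0) hlt
  rw [Real.log_div (ne_of_gt hC1) (ne_of_gt hC0),
      Real.log_div (ne_of_gt hT1) (ne_of_gt hT0)] at this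
  linarith
end

section
/- (Sign-switch condition.) Let α₁, α₂, α₃, α₄ be real parameters of the saturated additive DD model with all implied cell means Y_C0 = α₁, Y_T0 = α₁ + α₂, Y_C1 = α₁ + α₃, Y_T1 = α₁ + α₂ + α₃ + α₄ positive. If α₄ and α₃·α₂/α₁ have the same strict sign and 0 < |α₄| < |α₃·α₂/α₁|, then the level DD parameter α₄ and the log DD parameter β₄ = (ln Y_T1 − ln Y_T0) − (ln Y_C1 − ln Y_C0) have opposite strict signs, i.e., α₄ · β₄ < 0. -/
/-- Sign-switch condition in terms of the additive model parameters: if `α₄` and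
`α₃·α₂/α₁` share a strict sign and `0 < |α₄| < |α₃·α₂/α₁|`, then the level DD
parameter `α₄` and the log DD parameter `β₄` have opposite strict signs. -/
theorem signSwitch_condition
    (α₁ α₂ α₃ α₄ : ℝ)
    (hC0 : 0 < α₁) (hT0 : 0 < α₁ + α₂) (hC1 : 0 < α₁ + α₃)
    (hT1 : 0 < α₁ + α₂ + α₃ + α₄)
    (hsign : 0 < α₄ * (α₃ * α₂ / α₁))
    (h1 : 0 < |α₄|) (h2 : |α₄| < |α₃ * α₂ / α₁|) :
    α₄ * ((Real.log (α₁ + α₂ + α₃ + α₄) - Real.log (α₁ + α₂))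
      - (Real.log (α₁ + α₃) - Real.log α₁)) < 0 := by
  rcases mul_pos_iff.mp hsign with ⟨h4, hx⟩ | ⟨h4, hx⟩
  · -- α₄ > 0, α₃α₂/α₁ > 0
    rw [abs_of_pos h4, abs_of_pos hx] at h2
    have hlt : α₄ * α₁ < α₃ * α₂ := (lt_div_iff₀ hC0).mp h2
    have hm : (α₁ + α₂ + α₃ + α₄) * α₁ < (α₁ + α₂) * (α₁ + α₃) := by nlinarith
    have hlog := Real.log_lt_log (by positivity) hm
    rw [Real.log_mul hT1.ne' hC0.ne', Real.log_mul hT0.ne' hC1.ne'] at hlog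
    have : (Real.log (α₁ + α₂ + α₃ + α₄) - Real.log (α₁ + α₂))
        - (Real.log (α₁ + α₃) - Real.log α₁) < 0 := by linarith
    exact mul_neg_of_pos_of_neg h4 this
  · -- α₄ < 0, α₃α₂/α₁ < 0
    rw [abs_of_neg h4, abs_of_neg hx] at h2
    have hlt : α₃ * α₂ < α₄ * α₁ := by
      have : α₃ * α₂ / α₁ < α₄ := by linarith
      exact (div_lt_iff₀ hC0).mp this
    have hm : (α₁ + α₂) * (α₁ + α₃) < (α₁ + α₂ + α₃ + α₄) * α₁ := by nlinarith
    have hlog := Real.log_lt_log (by positivity) hm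
    rw [Real.log_mul hT1.ne' hC0.ne', Real.log_mul hT0.ne' hC1.ne'] at hlog
    have : 0 < (Real.log (α₁ + α₂ + α₃ + α₄) - Real.log (α₁ + α₂))
        - (Real.log (α₁ + α₃) - Real.log α₁) := by linarith
    exact mul_neg_of_neg_of_pos h4 this
end

section
/- (No sign switch without both a baseline difference and a time effect.) Let α₁, α₂, α₃, α₄ be real parameters of the saturated additive DD model with all implied cell means Y_C0 = α₁, Y_T0 = α₁ + α₂, Y_C1 = α₁ + α₃, Y_T1 = α₁ + α₂ + α₃ + α₄ positive, and suppose α₄ ≠ 0. If α₂ = 0 (no baseline difference in group means) or α₃ = 0 (zero aggregate time effect), then the log DD parameter β₄ = (ln Y_T1 − ln Y_T0) − (ln Y_C1 − ln Y_C0) is nonzero and has the same strict sign as α₄, i.e., α₄ · β₄ > 0. -/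
lemma aux_log_sign (x d : ℝ) (hx : 0 < x) (hxd : 0 < x + d) (hd : d ≠ 0) :
    0 < d * (Real.log (x + d) - Real.log x) := by
  rcases lt_or_gt_of_ne hd with hneg | hpos
  · have h1 : Real.log (x + d) < Real.log x :=
      Real.log_lt_log hxd (by linarith)
    exact mul_pos_of_neg_of_neg hneg (by linarith)
  · have h1 : Real.log x < Real.log (x + d) :=
      Real.log_lt_log hx (by linarith)
    exact mul_pos hpos (by linarith)

/-- No sign switch without both a baseline difference and a time effect: if
`α₄ ≠ 0` and either `α₂ = 0` or `α₃ = 0`, then the log DD parameter `β₄` is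
nonzero and has the same strict sign as `α₄`. -/
theorem noSignSwitch_without_baseline_or_time
    (α₁ α₂ α₃ α₄ : ℝ)
    (hC0 : 0 < α₁) (hT0 : 0 < α₁ + α₂) (hC1 : 0 < α₁ + α₃)
    (hT1 : 0 < α₁ + α₂ + α₃ + α₄)
    (hα₄ : α₄ ≠ 0) (h : α₂ = 0 ∨ α₃ = 0) :
    0 < α₄ * ((Real.log (α₁ + α₂ + α₃ + α₄) - Real.log (α₁ + α₂))
      - (Real.log (α₁ + α₃) - Real.log α₁)) := by
  rcases h with h | h <;> subst h <;> simp only [add_zero, zero_add] at *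
  · have := aux_log_sign (α₁ + α₃) α₄ hC1 (by linarith) hα₄
    have harw : α₁ + α₃ + α₄ = α₁ + α₃ + α₄ := rfl
    calc 0 < α₄ * (Real.log (α₁ + α₃ + α₄) - Real.log (α₁ + α₃)) := this
      _ = α₄ * ((Real.log (α₁ + α₃ + α₄) - Real.log α₁)
          - (Real.log (α₁ + α₃) - Real.log α₁)) := by ring
  · have := aux_log_sign (α₁ + α₂) α₄ hT0 (by linarith) hα₄
    calc 0 < α₄ * (Real.log (α₁ + α₂ + α₄) - Real.log (α₁ + α₂)) := this
      _ = α₄ * ((Real.log (α₁ + α₂ + α₄) - Real.log (α₁ + α₂))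
          - (Real.log α₁ - Real.log α₁)) := by ring
end

section
/- (Log DD effect is decreasing in the aggregate time effect.) Fix positive reals Y_C0 and Y_T0 and a real level DD parameter α₄ with Y_T0 + α₄ > Y_C0. For Δ_C such that Y_C0 + Δ_C > 0 and Y_T0 + Δ_C + α₄ > 0, define β₄(Δ_C) = ln((Y_T0 + Δ_C + α₄)/Y_T0) − ln((Y_C0 + Δ_C)/Y_C0). Then β₄ is strictly decreasing in Δ_C on this domain: holding the baseline means and the level DD parameter fixed, raising the common time effect strictly lowers the log DD parameter. -/
/-- The log DD parameter is strictly decreasing in the aggregate time effect,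
holding the baseline means and the level DD parameter fixed. -/
theorem logDD_strictAnti_timeEffect
    (Y_C0 Y_T0 α₄ : ℝ)
    (hC0 : 0 < Y_C0) (hT0 : 0 < Y_T0) (hgap : Y_C0 < Y_T0 + α₄) :
    ∀ Δ Δ' : ℝ,
      0 < Y_C0 + Δ → 0 < Y_T0 + Δ + α₄ →
      0 < Y_C0 + Δ' → 0 < Y_T0 + Δ' + α₄ →
      Δ < Δ' →
      Real.log ((Y_T0 + Δ' + α₄) / Y_T0) - Real.log ((Y_C0 + Δ') / Y_C0)
        < Real.log ((Y_T0 + Δ + α₄) / Y_T0) - Real.log ((Y_C0 + Δ) / Y_C0) := by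
  intro Δ Δ' hC hT hC' hT' hΔ
  rw [Real.log_div (ne_of_gt hT') (ne_of_gt hT0),
      Real.log_div (ne_of_gt hC') (ne_of_gt hC0),
      Real.log_div (ne_of_gt hT) (ne_of_gt hT0),
      Real.log_div (ne_of_gt hC) (ne_of_gt hC0)]
  have key : Real.log (Y_T0 + Δ' + α₄) + Real.log (Y_C0 + Δ)
      < Real.log (Y_C0 + Δ') + Real.log (Y_T0 + Δ + α₄) := by
    rw [← Real.log_mul (ne_of_gt hT') (ne_of_gt hC),
        ← Real.log_mul (ne_of_gt hC') (ne_of_gt hT)]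
    apply Real.log_lt_log (by positivity)
    nlinarith
  linarith
end
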